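/- The map Y → {right ideals of ℤG} given by λ ↦ J_λ is injective; equivalently, distinct sequences λ ∈ {0,1}^ℕ give distinct annihilator ideals J_λ. -/

import Mathlib

/-!
If `λ` and `λ'` first differ at `n = k+1`, say `λ(n) = 0` and `λ'(n) = 1`, take
`x = p₁ ⋯ p_{2k} (e_n - 1) ∈ ℤG`. The scalar kills `U_{λ,i}` for `i ≤ 2k`, while for `i ≥ 2k+1`
the vector `e_n = c_{2n-1}` lies in `H_{λ,i}`, so `x ∈ J_λ`. In `U_{λ',2k+1}` the scalar is a unit
(the primes are distinct) and `e_n ∉ H_{λ',2k+1}`, because there `c_{2n-1} = f_n`; so `x ∉ J_λ'`.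
-/


noncomputable section

/-- Parameter sequences: `Y = {0,1}^ℕ`; the paper's `λ(n)` (for `n ≥ 1`) is `l (n-1) : Bool`,
with `0 ↔ false` and `1 ↔ true`. -/
abbrev Y : Type := ℕ → Bool

/-- The 𝔽₂-vector space `V` with basis `{e i, f i : i ∈ ℤ}` (basis indexed by `ℤ × Bool`). -/
abbrev Vsp : Type := (ℤ × Bool) →₀ ZMod 2

/-- The basis vector `e i`. -/
def e (i : ℤ) : Vsp := Finsupp.single (i, false) 1

/-- The basis vector `f i`. -/
def f (i : ℤ) : Vsp := Finsupp.single (i, true) 1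

/-- The permutation of the basis swapping `e 0` and `f 0`. -/
def aPerm : Equiv.Perm (ℤ × Bool) := Equiv.swap ((0 : ℤ), false) ((0 : ℤ), true)

/-- The shift permutation of the basis, `e i ↦ e (i+1)`, `f i ↦ f (i+1)`. -/
def tPerm : Equiv.Perm (ℤ × Bool) := (Equiv.addRight (1 : ℤ)).prodCongr (Equiv.refl Bool)

/-- The automorphism of `V` induced by a permutation of the basis, viewed as an automorphism
of the (multiplicatively written) group `V`. -/
def permAut (σ : Equiv.Perm (ℤ × Bool)) : MulAut (Multiplicative Vsp) :=
  AddEquiv.toMultiplicative (Finsupp.domCongr σ : Vsp ≃+ Vsp)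

/-- The automorphism `a` of `V`. -/
def aAut : MulAut (Multiplicative Vsp) := permAut aPerm

/-- The automorphism `t` of `V`. -/
def tAut : MulAut (Multiplicative Vsp) := permAut tPerm

/-- The subgroup `⟨a, t⟩ ≤ GL(V)`. -/
def Asub : Subgroup (MulAut (Multiplicative Vsp)) := Subgroup.closure {aAut, tAut}

/-- The group `G = V ⋊ ⟨a, t⟩ ≅ C₂ ≀ C₂ ≀ C_∞`. -/
abbrev G : Type := Multiplicative Vsp ⋊[Asub.subtype] ↥Asub

/-- The inclusion `V → G`. -/
def ofV (v : Vsp) : G := SemidirectProduct.inl (Multiplicative.ofAdd v)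

/-- A subgroup of `V`, viewed as a subgroup of `G`. -/
def subgroupOfV (H : AddSubgroup Vsp) : Subgroup G :=
  Subgroup.map SemidirectProduct.inl (AddSubgroup.toSubgroup H)

/-- The sequence `c_λ`: for `n ≥ 1`, `c (2n-1) = e n`, `c (2n) = f n` if `λ(n) = 0`, and
`c (2n-1) = f n`, `c (2n) = e n` if `λ(n) = 1`. -/
def cseq (l : Y) (m : ℕ) : Vsp :=
  if (m % 2 = 1) ↔ (l ((m + 1) / 2 - 1) = false) then e ((m + 1) / 2) else f ((m + 1) / 2)

/-- The subgroup `H_{λ,i} = ⟨e 0, f 0, e (-1), f (-1), …, e (-i), f (-i), c 1, …, c i⟩ ≤ V`. -/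
def Hsub (l : Y) (i : ℕ) : AddSubgroup Vsp :=
  AddSubgroup.closure
    ((fun j : ℕ => e (-(j : ℤ))) '' Set.Icc 0 i ∪ (fun j : ℕ => f (-(j : ℤ))) '' Set.Icc 0 i ∪
      cseq l '' Set.Icc 1 i)

/-- The integral group ring `ℤG`. -/
abbrev ZG : Type := MonoidAlgebra ℤ G

/-- The element of `ℤG` corresponding to `v ∈ V ≤ G`. -/
def zOfV (v : Vsp) : ZG := MonoidAlgebra.of ℤ G (ofV v)

/-- The (left) ideal of the group ring `kG` generated by `{g - 1 : g ∈ S}`; this is the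
mirror image of the right ideal `(S - 1)kG` of the paper (all modules are taken as left
modules here, mirroring the right modules of the paper). -/
def grpIdeal (k : Type) [CommRing k] (S : Set G) : Ideal (MonoidAlgebra k G) :=
  Ideal.span ((fun g : G => (MonoidAlgebra.of k G g : MonoidAlgebra k G) - 1) '' S)

/-- The permutation module `U_{λ,i} = 𝔽_{p i}G/(H_{λ,i} - 1)𝔽_{p i}G`. -/
def Ui (p : ℕ → ℕ) (l : Y) (i : ℕ) : Type :=
  MonoidAlgebra (ZMod (p i)) G ⧸ grpIdeal (ZMod (p i)) (subgroupOfV (Hsub l i) : Set G)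

instance (p : ℕ → ℕ) (l : Y) (i : ℕ) : AddCommGroup (Ui p l i) :=
  inferInstanceAs (AddCommGroup
    (MonoidAlgebra (ZMod (p i)) G ⧸ grpIdeal (ZMod (p i)) (subgroupOfV (Hsub l i) : Set G)))

instance (p : ℕ → ℕ) (l : Y) (i : ℕ) : Module (MonoidAlgebra (ZMod (p i)) G) (Ui p l i) :=
  inferInstanceAs (Module (MonoidAlgebra (ZMod (p i)) G)
    (MonoidAlgebra (ZMod (p i)) G ⧸ grpIdeal (ZMod (p i)) (subgroupOfV (Hsub l i) : Set G)))

/-- The canonical ring homomorphism `ℤG → 𝔽_qG`, reducing coefficients mod `q`. -/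
def coeffHom (q : ℕ) : ZG →+* MonoidAlgebra (ZMod q) G :=
  ((MonoidAlgebra.lift ℤ (MonoidAlgebra (ZMod q) G) G) (MonoidAlgebra.of (ZMod q) G)).toRingHom

/-- `U_{λ,i}` as a `ℤG`-module. -/
instance (p : ℕ → ℕ) (l : Y) (i : ℕ) : Module ZG (Ui p l i) :=
  Module.compHom _ (coeffHom (p i))

/-- The module generator `u_{λ,i} = 1 + (H_{λ,i} - 1)𝔽_{p i}G` of `U_{λ,i}`. -/
def ui (p : ℕ → ℕ) (l : Y) (i : ℕ) : Ui p l i :=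
  (Submodule.Quotient.mk 1 :
    MonoidAlgebra (ZMod (p i)) G ⧸ grpIdeal (ZMod (p i)) (subgroupOfV (Hsub l i) : Set G))

/-- The index set `{1, 2, 3, …}` for the sequences `(p_i)` and `(H_{λ,i})`. -/
abbrev Idx : Type := {i : ℕ // 1 ≤ i}

/-- The element `u_λ = (u_{λ,1}, u_{λ,2}, …) ∈ ∏_{i ≥ 1} U_{λ,i}`. -/
def ul (p : ℕ → ℕ) (l : Y) : ∀ i : Idx, Ui p l i.1 := fun i => ui p l i.1

/-- The module `M_λ`: the cyclic `ℤG`-submodule of `∏_{i ≥ 1} U_{λ,i}` generated by `u_λ`. -/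
def Ml (p : ℕ → ℕ) (l : Y) : Submodule ZG (∀ i : Idx, Ui p l i.1) :=
  Submodule.span ZG {ul p l}

/-- The annihilator ideal `J_λ = ann_{ℤG}(u_λ)`. -/
def Jl (p : ℕ → ℕ) (l : Y) : Ideal ZG :=
  LinearMap.ker (LinearMap.toSpanSingleton ZG (∀ i : Idx, Ui p l i.1) (ul p l))

/-- The submodule `M(N-1)` of `M = M_λ`, spanned by the elements `(x-1)m`, `m ∈ M`, `x ∈ N`. -/
def MlAug (p : ℕ → ℕ) (l : Y) (N : AddSubgroup Vsp) : Submodule ZG ↥(Ml p l) :=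
  Submodule.span ZG {z : ↥(Ml p l) | ∃ x ∈ N, ∃ m : ↥(Ml p l), z = (zOfV x - 1) • m}

/-- The ideal `(N - 1)ℤG` for a subgroup `N ≤ V`. -/
def augV (N : AddSubgroup Vsp) : Ideal ZG :=
  Ideal.span ((fun v : Vsp => zOfV v - 1) '' (N : Set Vsp))

open MonoidAlgebra

section GroupRing

variable {k Γ : Type*} [CommRing k] [Group Γ]

lemma mapDomainLinearMap_mk_mul_of_of_mem {H : Subgroup Γ} {h : Γ} (hh : h ∈ H)
    (x : MonoidAlgebra k Γ) :
    mapDomainLinearMap k k (QuotientGroup.mk : Γ → Γ ⧸ H) (x * of k Γ h) =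
      mapDomainLinearMap k k (QuotientGroup.mk : Γ → Γ ⧸ H) x := by
  induction x using induction_linear with
  | zero => simp
  | add x y hx hy => rw [add_mul, map_add, map_add, hx, hy]
  | single g r => simp [QuotientGroup.mk_mul_of_mem g hh]

/-- Summing coefficients over each left coset `gH` kills the left ideal spanned by the `h - 1`,
`h ∈ H`, but not `g - 1` for `g ∉ H`. -/
lemma of_sub_one_mem_span_iff [Nontrivial k] (H : Subgroup Γ) (g : Γ) :
    of k Γ g - 1 ∈ Ideal.span ((fun h => of k Γ h - 1) '' (H : Set Γ)) ↔ g ∈ H := by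
  refine ⟨fun hg => ?_, fun hg => Ideal.subset_span ⟨g, hg, rfl⟩⟩
  set ψ := mapDomainLinearMap k k (QuotientGroup.mk : Γ → Γ ⧸ H)
  have hψ : ∀ x ∈ Ideal.span ((fun h => of k Γ h - 1) '' (H : Set Γ)),
      ∀ r : MonoidAlgebra k Γ, ψ (r * x) = 0 := by
    intro x hx
    induction hx using Submodule.span_induction with
    | mem x hx =>
      obtain ⟨h, hh, rfl⟩ := hx
      intro r
      rw [mul_sub, mul_one, map_sub, mapDomainLinearMap_mk_mul_of_of_mem hh, sub_self]
    | zero => simp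
    | add x y _ _ hx hy => intro r; rw [mul_add, map_add, hx, hy, add_zero]
    | smul a x _ hx => intro r; rw [smul_eq_mul, ← mul_assoc]; exact hx (r * a)
  have hcoset := hψ _ hg 1
  rw [one_mul, map_sub, sub_eq_zero, one_def] at hcoset
  simp only [ψ, of_apply, mapDomainLinearMap_single] at hcoset
  simpa using QuotientGroup.eq.mp (single_left_injective one_ne_zero hcoset).symm

end GroupRing

lemma ofV_mem_subgroupOfV_iff (N : AddSubgroup Vsp) (v : Vsp) :
    ofV v ∈ subgroupOfV N ↔ v ∈ N :=
  Subgroup.mem_map_iff_mem SemidirectProduct.inl_injective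

lemma cseq_two_mul_add_one (l : Y) (k : ℕ) :
    cseq l (2 * k + 1) = if l k then f (k + 1) else e (k + 1) := by
  have hidx : (2 * k + 1 + 1) / 2 - 1 = k := by omega
  have hpos : (((2 * k + 1 : ℕ) : ℤ) + 1) / 2 = k + 1 := by omega
  rw [cseq, hidx, hpos]
  cases l k <;> simp

section Hsub

variable {l : Y} {k : ℕ}

lemma e_succ_mem_Hsub {i : ℕ} (hl : l k = false) (hi : 2 * k + 1 ≤ i) :
    e (k + 1) ∈ Hsub l i :=
  AddSubgroup.subset_closure <|
    Or.inr ⟨2 * k + 1, ⟨by omega, hi⟩, by simp [cseq_two_mul_add_one, hl]⟩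

/-- Among the generators of `H_{λ,2k+1}` only `c (2k+1)` could be `e (k+1)`, and it is `f (k+1)`. -/
lemma e_succ_not_mem_Hsub (hl : l k = true) : e (k + 1) ∉ Hsub l (2 * k + 1) := by
  let K := (Finsupp.applyAddHom ((k + 1 : ℤ), false) : Vsp →+ ZMod 2).ker
  suffices Hsub l (2 * k + 1) ≤ K from fun he => by simpa [K, e] using this he
  rw [Hsub, AddSubgroup.closure_le]
  rintro v ((⟨j, -, rfl⟩ | ⟨j, -, rfl⟩) | ⟨m, hm, rfl⟩)
  · simp [K, e, Finsupp.single_apply]; omega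
  · simp [K, f]
  · obtain rfl | hm' : m = 2 * k + 1 ∨ (m + 1) / 2 ≤ k := by simp at hm; omega
    · simp [K, f, cseq_two_mul_add_one, hl]
    · rw [cseq]; split <;> simp [K, e, f, Finsupp.single_apply]; omega

end Hsub

lemma smul_ui_eq_zero_iff (p : ℕ → ℕ) (l : Y) (i : ℕ) (x : ZG) :
    x • ui p l i = 0 ↔
      coeffHom (p i) x ∈ grpIdeal (ZMod (p i)) (subgroupOfV (Hsub l i) : Set G) := by
  change (coeffHom (p i) x • Submodule.Quotient.mk 1 : MonoidAlgebra (ZMod (p i)) G ⧸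
    grpIdeal (ZMod (p i)) (subgroupOfV (Hsub l i) : Set G)) = 0 ↔ _
  rw [← Submodule.Quotient.mk_smul, smul_eq_mul, mul_one, Submodule.Quotient.mk_eq_zero]

lemma mem_Jl_iff (p : ℕ → ℕ) (l : Y) (x : ZG) :
    x ∈ Jl p l ↔ ∀ i, 1 ≤ i →
      coeffHom (p i) x ∈ grpIdeal (ZMod (p i)) (subgroupOfV (Hsub l i) : Set G) := by
  simp only [Jl, LinearMap.mem_ker, LinearMap.toSpanSingleton_apply, funext_iff, Pi.zero_apply,
    ul, Pi.smul_apply, smul_ui_eq_zero_iff, Subtype.forall]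

/-- `N (e (k+1) - 1)` with `N = p 1 ⋯ p (2k)`: the factor `N` kills the first `2k` components
of `u_λ`, and `e (k+1) - 1` kills the component `2k+1` exactly when `λ(k+1) = 0`. -/
def separatingElement (p : ℕ → ℕ) (k : ℕ) : ZG :=
  ((∏ j ∈ Finset.Icc 1 (2 * k), p j : ℕ) : ZG) * (zOfV (e (k + 1)) - 1)

lemma coeffHom_separatingElement (p : ℕ → ℕ) (k q : ℕ) :
    coeffHom q (separatingElement p k) =
      ((∏ j ∈ Finset.Icc 1 (2 * k), p j : ℕ) : MonoidAlgebra (ZMod q) G) *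
        (of (ZMod q) G (ofV (e (k + 1))) - 1) := by
  simp [separatingElement, coeffHom, zOfV]

lemma separatingElement_mem_Jl (p : ℕ → ℕ) {l : Y} {k : ℕ} (hl : l k = false) :
    separatingElement p k ∈ Jl p l := by
  rw [mem_Jl_iff]
  intro i hi
  rw [coeffHom_separatingElement]
  rcases le_or_gt i (2 * k) with hik | hik
  · have hdvd : p i ∣ ∏ j ∈ Finset.Icc 1 (2 * k), p j :=
      Finset.dvd_prod_of_mem _ (Finset.mem_Icc.mpr ⟨hi, hik⟩)
    rw [← map_natCast (algebraMap (ZMod (p i)) _), (ZMod.natCast_eq_zero_iff _ _).mpr hdvd,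
      map_zero, zero_mul]
    exact Ideal.zero_mem _
  · refine Ideal.mul_mem_left _ _ (Ideal.subset_span ⟨_, ?_, rfl⟩)
    exact (ofV_mem_subgroupOfV_iff _ _).mpr (e_succ_mem_Hsub hl hik)

lemma separatingElement_not_mem_Jl {p : ℕ → ℕ} {l : Y} {k : ℕ} (hl : l k = true)
    (hq : (p (2 * k + 1)).Prime)
    (hN : (∏ j ∈ Finset.Icc 1 (2 * k), p j).Coprime (p (2 * k + 1))) :
    separatingElement p k ∉ Jl p l := by
  have : Fact (p (2 * k + 1)).Prime := ⟨hq⟩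
  have hunit := ((ZMod.isUnit_iff_coprime _ _).mpr hN).map
    (algebraMap (ZMod (p (2 * k + 1))) (MonoidAlgebra (ZMod (p (2 * k + 1))) G))
  rw [map_natCast] at hunit
  intro hJ
  have hmem := (mem_Jl_iff p l _).mp hJ (2 * k + 1) (by omega)
  rw [coeffHom_separatingElement, Ideal.unit_mul_mem_iff_mem _ hunit, grpIdeal,
    of_sub_one_mem_span_iff, ofV_mem_subgroupOfV_iff] at hmem
  exact e_succ_not_mem_Hsub hl hmem

lemma Jl_ne_of_eq_false_of_eq_true {p : ℕ → ℕ} {l l' : Y} {k : ℕ} (hl : l k = false)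
    (hl' : l' k = true) (hq : (p (2 * k + 1)).Prime)
    (hN : (∏ j ∈ Finset.Icc 1 (2 * k), p j).Coprime (p (2 * k + 1))) : Jl p l ≠ Jl p l' :=
  fun hJ => separatingElement_not_mem_Jl hl' hq hN (hJ ▸ separatingElement_mem_Jl p hl)

theorem stmt6 (p : ℕ → ℕ) (hp : ∀ i, 1 ≤ i → (p i).Prime)
    (hinj : ∀ i j, 1 ≤ i → 1 ≤ j → p i = p j → i = j) :
    Function.Injective (Jl p) := by
  intro l l' hJ
  by_contra hne
  obtain ⟨k, hk⟩ := Function.ne_iff.mp hne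
  have hq := hp (2 * k + 1) (by omega)
  have hN : (∏ j ∈ Finset.Icc 1 (2 * k), p j).Coprime (p (2 * k + 1)) :=
    Nat.Coprime.prod_left fun j hj => by
      obtain ⟨hj1, hjk⟩ := Finset.mem_Icc.mp hj
      refine (Nat.coprime_primes (hp j hj1) hq).mpr fun hpj => ?_
      have := hinj j (2 * k + 1) hj1 (by omega) hpj
      omega
  cases hlk : l k <;> cases hlk' : l' k
  · exact hk (hlk.trans hlk'.symm)
  · exact Jl_ne_of_eq_false_of_eq_true hlk hlk' hq hN hJ
  · exact Jl_ne_of_eq_false_of_eq_true hlk' hlk hq hN hJ.symm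
  · exact hk (hlk.trans hlk'.symm)
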